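/- arXiv:1612.04106 — 2 statements merged into one kernel-verified Lean document; each statement's English description precedes it below -/
import Mathlib

section
/- (Green's formula) For any y ∈ Dom(L_max) and z ∈ Dom(L⁺_max) one has ∫_a^b ( D^[2]y(t)·conj(z(t)) − y(t)·conj(D^{2}z(t)) ) dt = ( D^[1]y·conj(z) − y·conj(D^{1}z) ) evaluated at t = b minus at t = a, where u·conj(v) denotes the standard inner product of vectors in ℂ^s. -/
open MeasureTheory Set Filter Topology Matrix
open scoped Matrix.Norms.L2Operator InnerProductSpace ENNReal

noncomputable section

namespace SL

abbrev Mat (s : ℕ) := Matrix (Fin s) (Fin s) ℂ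
abbrev V (s : ℕ) := EuclideanSpace ℂ (Fin s)
abbrev V2 (s : ℕ) := EuclideanSpace ℂ (Fin s ⊕ Fin s)

/-- matrix times vector, landing in Euclidean space -/
def mv {s : ℕ} (M : Mat s) (x : V s) : V s := WithLp.toLp 2 (fun i => M.mulVec x i)

/-- build a vector of `ℂ^{2s}` out of two vectors of `ℂ^s` -/
def el {s : ℕ} (x z : V s) : V2 s := WithLp.toLp 2 (fun i => Sum.elim x z i)

/-- condition (KM) -/
def KM (a b : ℝ) {s : ℕ} (p Q : ℝ → Mat s) : Prop :=
  (∀ᵐ t ∂(volume.restrict (Ioo a b)), IsUnit (p t)) ∧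
  IntegrableOn (fun t => (p t)⁻¹) (Ioo a b) ∧
  IntegrableOn (fun t => (p t)⁻¹ * Q t) (Ioo a b) ∧
  IntegrableOn (fun t => Q t * (p t)⁻¹) (Ioo a b) ∧
  IntegrableOn (fun t => Q t * (p t)⁻¹ * Q t) (Ioo a b)

/-- `y` belongs to the maximal domain, with quasi-derivative `u = D^[1]y` and
`g = D^[2]y`; this encodes absolute continuity of `y` and `D^[1]y` via integral
equations. -/
structure InMaxDom (a b : ℝ) {s : ℕ} (p Q : ℝ → Mat s) (y u g : ℝ → V s) : Prop where
  cy : ContinuousOn y (Icc a b)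
  cu : ContinuousOn u (Icc a b)
  hy : ∀ t ∈ Icc a b, y t = y a + ∫ τ in a..t,
        (mv ((p τ)⁻¹ * Q τ) (y τ) + mv (p τ)⁻¹ (u τ))
  hu : ∀ t ∈ Icc a b, u t = u a + ∫ τ in a..t,
        (g τ - mv (Q τ * (p τ)⁻¹ * Q τ) (y τ) - mv (Q τ * (p τ)⁻¹) (u τ))

variable (s : ℕ) (a b : ℝ)

/-- the Hilbert space `L²((a,b), ℂ^s)` -/
abbrev H := Lp (E := V s) (p := 2) (volume.restrict (Ioo a b))

variable {s a b}

/-- the graph of the maximal operator `L_max : y ↦ -D^[2]y` -/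
def maxGraph (a b : ℝ) {s : ℕ} (p Q : ℝ → Mat s) : Set (H s a b × H s a b) :=
  {fh | ∃ y u g : ℝ → V s, InMaxDom a b p Q y u g ∧
    MemLp g 2 (volume.restrict (Ioo a b)) ∧
    (⇑fh.1 : ℝ → V s) =ᵐ[volume.restrict (Ioo a b)] y ∧
    (⇑fh.2 : ℝ → V s) =ᵐ[volume.restrict (Ioo a b)] (fun t => -g t)}

/-- the graph of the minimal operator -/
def minGraph (a b : ℝ) {s : ℕ} (p Q : ℝ → Mat s) : Set (H s a b × H s a b) :=
  {fh | ∃ y u g : ℝ → V s, InMaxDom a b p Q y u g ∧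
    MemLp g 2 (volume.restrict (Ioo a b)) ∧
    (⇑fh.1 : ℝ → V s) =ᵐ[volume.restrict (Ioo a b)] y ∧
    (⇑fh.2 : ℝ → V s) =ᵐ[volume.restrict (Ioo a b)] (fun t => -g t) ∧
    y a = 0 ∧ u a = 0 ∧ y b = 0 ∧ u b = 0}

/-- graph of the operator `L_{α,β}` given by boundary conditions
`α·𝒴(a) + β·𝒴(b) = 0`, where `𝒴(c) = (y(c), D^[1]y(c))`. -/
def bcGraph (a b : ℝ) {s : ℕ} (p Q : ℝ → Mat s)
    (α β : Matrix (Fin s ⊕ Fin s) (Fin s ⊕ Fin s) ℂ) : Set (H s a b × H s a b) :=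
  {fh | ∃ y u g : ℝ → V s, InMaxDom a b p Q y u g ∧
    MemLp g 2 (volume.restrict (Ioo a b)) ∧
    (⇑fh.1 : ℝ → V s) =ᵐ[volume.restrict (Ioo a b)] y ∧
    (⇑fh.2 : ℝ → V s) =ᵐ[volume.restrict (Ioo a b)] (fun t => -g t) ∧
    α.mulVec (el (y a) (u a)) + β.mulVec (el (y b) (u b)) = 0}

/-- `μ` belongs to the resolvent set of the operator with graph `G`,
with resolvent `R = (L - μ)⁻¹`. -/
def IsResolventAt (G : Set (H s a b × H s a b)) (μ : ℂ) (R : H s a b →L[ℂ] H s a b) : Prop :=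
  (∀ fh ∈ G, R (fh.2 - μ • fh.1) = fh.1) ∧ ∀ h : H s a b, (R h, h + μ • R h) ∈ G


/-- `2s × 2s` matrix times vector in `ℂ^{2s}` -/
def mv2 {s : ℕ} (M : Matrix (Fin s ⊕ Fin s) (Fin s ⊕ Fin s) ℂ) (x : V2 s) : V2 s :=
  WithLp.toLp 2 (fun i => M.mulVec x i)

/-- boundary condition `(K - I)Γ₁y + i(K + I)Γ₂y = 0`, where
`Γ₁y = (D^[1]y(a), -D^[1]y(b))` and `Γ₂y = (y(a), y(b))` (here `u = D^[1]y`). -/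
def KBCplus (a b : ℝ) {s : ℕ} (K : V2 s →L[ℂ] V2 s) (y u : ℝ → V s) : Prop :=
  (K - 1) (el (u a) (-(u b))) + Complex.I • ((K + 1) (el (y a) (y b))) = 0

/-- boundary condition `(K - I)Γ₁y - i(K + I)Γ₂y = 0`. -/
def KBCminus (a b : ℝ) {s : ℕ} (K : V2 s →L[ℂ] V2 s) (y u : ℝ → V s) : Prop :=
  (K - 1) (el (u a) (-(u b))) - Complex.I • ((K + 1) (el (y a) (y b))) = 0

/-- the graph of the operator `L_K` -/
def LKGraph (a b : ℝ) {s : ℕ} (p Q : ℝ → Mat s) (K : V2 s →L[ℂ] V2 s) :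
    Set (H s a b × H s a b) :=
  {fh | ∃ y u g : ℝ → V s, InMaxDom a b p Q y u g ∧
    MemLp g 2 (volume.restrict (Ioo a b)) ∧
    (⇑fh.1 : ℝ → V s) =ᵐ[volume.restrict (Ioo a b)] y ∧
    (⇑fh.2 : ℝ → V s) =ᵐ[volume.restrict (Ioo a b)] (fun t => -g t) ∧
    KBCplus a b K y u}

/-- the graph of the operator `L^K` -/
def LKGraph' (a b : ℝ) {s : ℕ} (p Q : ℝ → Mat s) (K : V2 s →L[ℂ] V2 s) :
    Set (H s a b × H s a b) :=
  {fh | ∃ y u g : ℝ → V s, InMaxDom a b p Q y u g ∧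
    MemLp g 2 (volume.restrict (Ioo a b)) ∧
    (⇑fh.1 : ℝ → V s) =ᵐ[volume.restrict (Ioo a b)] y ∧
    (⇑fh.2 : ℝ → V s) =ᵐ[volume.restrict (Ioo a b)] (fun t => -g t) ∧
    KBCminus a b K y u}

/-- a densely defined operator `T` is dissipative if `Im (Tx, x) ≥ 0`;
note that `(Tx, x)` in the "physics" convention equals `⟪x, Tx⟫` in Mathlib's. -/
def Dissipative {s : ℕ} {a b : ℝ} (T : H s a b →ₗ.[ℂ] H s a b) : Prop :=
  ∀ x : T.domain, 0 ≤ (inner ℂ ((x : H s a b)) (T x) : ℂ).im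

def Accumulative {s : ℕ} {a b : ℝ} (T : H s a b →ₗ.[ℂ] H s a b) : Prop :=
  ∀ x : T.domain, (inner ℂ ((x : H s a b)) (T x) : ℂ).im ≤ 0

/-- maximal dissipative: densely defined, dissipative,
with no non-trivial dissipative extension -/
def MaximalDissipative {s : ℕ} {a b : ℝ} (T : H s a b →ₗ.[ℂ] H s a b) : Prop :=
  Dense (T.domain : Set (H s a b)) ∧ Dissipative T ∧
    ∀ T' : H s a b →ₗ.[ℂ] H s a b, T ≤ T' → Dissipative T' → T' = T

def MaximalAccumulative {s : ℕ} {a b : ℝ} (T : H s a b →ₗ.[ℂ] H s a b) : Prop :=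
  Dense (T.domain : Set (H s a b)) ∧ Accumulative T ∧
    ∀ T' : H s a b →ₗ.[ℂ] H s a b, T ≤ T' → Accumulative T' → T' = T


end SL

/-!
Green's formula is integration by parts for the Lagrange bracket `⟪z, D^[1]y⟫ - ⟪D^{1}z, y⟫`.
Expressing `y'` and `(D^[1]y)'` through the first-order system for `(y, D^[1]y)`, and likewise
for `z`, every term involving `Q` or `p⁻¹` cancels against its counterpart from the adjoint system
(built from `pᴴ`, `Qᴴ`), leaving `⟪z, D^[2]y⟫ - ⟪D^{2}z, y⟫` as the derivative of the bracket.
As the functions involved are only primitives of integrable functions, integration by parts is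
proved by Fubini's theorem: the square `(a, b]²` splits into the triangles `τ ≤ t` and `t < τ`.
-/

section Bilinear

variable {E F G : Type*} [NormedAddCommGroup E] [NormedSpace ℝ E]
  [NormedAddCommGroup F] [NormedSpace ℝ F] [NormedAddCommGroup G] [NormedSpace ℝ G]
  (B : E →L[ℝ] F →L[ℝ] G)

theorem MeasureTheory.IntegrableOn.apply₂_continuousOn_of_subset {X : Type*} [TopologicalSpace X]
    [MeasurableSpace X] [OpensMeasurableSpace X] [SecondCountableTopologyEither X F]
    {μ : Measure X} {A K : Set X} {φ : X → E} {g : X → F} (hφ : IntegrableOn φ A μ)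
    (hg : ContinuousOn g K) (hA : MeasurableSet A) (hK : IsCompact K) (hAK : A ⊆ K) :
    IntegrableOn (fun x => B (φ x) (g x)) A μ := by
  obtain ⟨C, hC⟩ := hK.exists_bound_of_continuousOn hg
  refine Integrable.mono' (hφ.norm.mul_const (‖B‖ * C))
    (B.continuous₂.comp_aestronglyMeasurable
      (hφ.aestronglyMeasurable.prodMk ((hg.mono hAK).aestronglyMeasurable hA))) ?_
  filter_upwards [ae_restrict_mem hA] with x hx
  calc ‖B (φ x) (g x)‖ ≤ ‖B‖ * ‖φ x‖ * ‖g x‖ := B.le_opNorm₂ _ _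
    _ ≤ ‖B‖ * ‖φ x‖ * C := by gcongr; exact hC x (hAK hx)
    _ = ‖φ x‖ * (‖B‖ * C) := by ring

theorem IntervalIntegrable.apply₂_continuousOn {a b : ℝ} {φ : ℝ → E} {g : ℝ → F}
    (hφ : IntervalIntegrable φ volume a b) (hg : ContinuousOn g (uIcc a b)) :
    IntervalIntegrable (fun t => B (φ t) (g t)) volume a b :=
  ⟨IntegrableOn.apply₂_continuousOn_of_subset B hφ.1 hg measurableSet_Ioc isCompact_uIcc
      (Ioc_subset_Icc_self.trans Icc_subset_uIcc),
    IntegrableOn.apply₂_continuousOn_of_subset B hφ.2 hg measurableSet_Ioc isCompact_uIcc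
      (Ioc_subset_Icc_self.trans Icc_subset_uIcc')⟩

theorem integral_Ioc_indicator_Iic {f : ℝ → E} {a b t : ℝ} (ht : t ∈ Icc a b) :
    ∫ τ in Ioc a b, (Iic t).indicator f τ = ∫ τ in a..t, f τ := by
  rw [← intervalIntegral.integral_of_le (ht.1.trans ht.2)]
  exact intervalIntegral.integral_indicator ht

theorem integral_Ioc_indicator_Iio {f : ℝ → E} {a b t : ℝ} (ht : t ∈ Icc a b) :
    ∫ τ in Ioc a b, (Iio t).indicator f τ = ∫ τ in a..t, f τ := by
  rw [← integral_Ioc_indicator_Iic ht]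
  exact integral_congr_ae (ae_restrict_of_ae (indicator_ae_eq_of_ae_eq_set Iio_ae_eq_Iic))

theorem continuousOn_of_eq_add_integral {a b : ℝ} (hab : a ≤ b) {f φ : ℝ → E}
    (hφ : IntervalIntegrable φ volume a b) (hf : ∀ t ∈ Icc a b, f t = f a + ∫ τ in a..t, φ τ) :
    ContinuousOn f (uIcc a b) :=
  (continuousOn_const.add
    (intervalIntegral.continuousOn_primitive_interval' hφ left_mem_uIcc)).congr
      fun t ht => hf t (uIcc_of_le hab ▸ ht)

theorem intervalIntegrable_apply₂_add_apply₂ {a b : ℝ} (hab : a ≤ b) {f φ : ℝ → E}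
    {g ψ : ℝ → F} (hφ : IntervalIntegrable φ volume a b) (hψ : IntervalIntegrable ψ volume a b)
    (hf : ∀ t ∈ Icc a b, f t = f a + ∫ τ in a..t, φ τ)
    (hg : ∀ t ∈ Icc a b, g t = g a + ∫ τ in a..t, ψ τ) :
    IntervalIntegrable (fun t => B (φ t) (g t) + B (f t) (ψ t)) volume a b :=
  (hφ.apply₂_continuousOn B (continuousOn_of_eq_add_integral hab hψ hg)).add
    (hψ.apply₂_continuousOn B.flip (continuousOn_of_eq_add_integral hab hφ hf))

variable [CompleteSpace E] [CompleteSpace F] [CompleteSpace G]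

theorem intervalIntegral.integral_apply₂_primitive_add_apply₂_primitive {a b : ℝ} (hab : a ≤ b)
    {φ : ℝ → E} {ψ : ℝ → F} (hφ : IntervalIntegrable φ volume a b)
    (hψ : IntervalIntegrable ψ volume a b) :
    ∫ t in a..b, (B (φ t) (∫ τ in a..t, ψ τ) + B (∫ τ in a..t, φ τ) (ψ t)) =
      B (∫ t in a..b, φ t) (∫ t in a..b, ψ t) := by
  set μ := volume.restrict (Ioc a b)
  rw [intervalIntegrable_iff_integrableOn_Ioc_of_le hab] at hφ hψ
  set P : ℝ × ℝ → G := fun q => B (φ q.1) (ψ q.2)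
  have hP : Integrable P (μ.prod μ) :=
    Integrable.mono' ((hφ.norm.const_mul ‖B‖).mul_prod hψ.norm)
      (B.continuous₂.comp_aestronglyMeasurable
        (hφ.aestronglyMeasurable.comp_fst.prodMk hψ.aestronglyMeasurable.comp_snd))
      (Eventually.of_forall fun q => B.le_opNorm₂ _ _)
  set S : Set (ℝ × ℝ) := {q | q.2 ≤ q.1}
  have hS : MeasurableSet S := measurableSet_le measurable_snd measurable_fst
  have below : ∀ᵐ t ∂μ, ∫ τ, S.indicator P (t, τ) ∂μ = B (φ t) (∫ τ in a..t, ψ τ) := by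
    filter_upwards [ae_restrict_mem measurableSet_Ioc] with t ht
    have hP_t : ∀ τ, S.indicator P (t, τ) = B (φ t) ((Iic t).indicator ψ τ) := by
      intro τ
      by_cases hτ : τ ≤ t <;> simp [S, P, hτ]
    simp_rw [hP_t]
    rw [(B (φ t)).integral_comp_comm (hψ.indicator measurableSet_Iic),
      integral_Ioc_indicator_Iic (Ioc_subset_Icc_self ht)]
  have above : ∀ᵐ τ ∂μ, ∫ t, Sᶜ.indicator P (t, τ) ∂μ = B (∫ t in a..τ, φ t) (ψ τ) := by
    filter_upwards [ae_restrict_mem measurableSet_Ioc] with τ hτ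
    have hP_τ : ∀ t, Sᶜ.indicator P (t, τ) = B.flip (ψ τ) ((Iio τ).indicator φ t) := by
      intro t
      by_cases ht : t < τ <;> simp [S, P, ht]
    simp_rw [hP_τ]
    rw [(B.flip (ψ τ)).integral_comp_comm (hφ.indicator measurableSet_Iio),
      integral_Ioc_indicator_Iio (Ioc_subset_Icc_self hτ), B.flip_apply]
  have hbelow := (hP.indicator hS).integral_prod_left
  have habove := (hP.indicator hS.compl).integral_prod_right
  rw [intervalIntegral.integral_of_le hab, intervalIntegral.integral_of_le hab,
    intervalIntegral.integral_of_le hab,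
    MeasureTheory.integral_add (hbelow.congr below) (habove.congr above),
    ← MeasureTheory.integral_congr_ae below, ← MeasureTheory.integral_congr_ae above,
    ← integral_prod _ (hP.indicator hS), ← integral_prod_symm _ (hP.indicator hS.compl),
    MeasureTheory.integral_indicator hS, MeasureTheory.integral_indicator hS.compl,
    integral_add_compl hS hP, integral_prod _ hP]
  exact (MeasureTheory.integral_congr_ae
    (Eventually.of_forall fun t => (B (φ t)).integral_comp_comm hψ)).trans
      ((B.flip _).integral_comp_comm hφ)

theorem intervalIntegral.integral_apply₂_add_apply₂_eq_sub {a b : ℝ} (hab : a ≤ b)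
    {f φ : ℝ → E} {g ψ : ℝ → F}
    (hφ : IntervalIntegrable φ volume a b) (hψ : IntervalIntegrable ψ volume a b)
    (hf : ∀ t ∈ Icc a b, f t = f a + ∫ τ in a..t, φ τ)
    (hg : ∀ t ∈ Icc a b, g t = g a + ∫ τ in a..t, ψ τ) :
    ∫ t in a..b, (B (φ t) (g t) + B (f t) (ψ t)) = B (f b) (g b) - B (f a) (g a) := by
  have hsplit : EqOn (fun t => B (φ t) (g t) + B (f t) (ψ t))
      (fun t => (B (φ t) (g a) + B (f a) (ψ t)) +
        (B (φ t) (∫ τ in a..t, ψ τ) + B (∫ τ in a..t, φ τ) (ψ t))) (uIcc a b) := by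
    intro t ht
    rw [uIcc_of_le hab] at ht
    simp only [hf t ht, hg t ht, map_add, _root_.add_apply]
    abel
  have hφ_ga : IntervalIntegrable (fun t => B (φ t) (g a)) volume a b :=
    hφ.apply₂_continuousOn B continuousOn_const
  have hψ_fa : IntervalIntegrable (fun t => B (f a) (ψ t)) volume a b :=
    hψ.apply₂_continuousOn B.flip continuousOn_const
  have hprim := intervalIntegrable_apply₂_add_apply₂ B hab hφ hψ
    (f := fun t => ∫ τ in a..t, φ τ) (g := fun t => ∫ τ in a..t, ψ τ)
    (fun t _ => by rw [integral_same, zero_add]) (fun t _ => by rw [integral_same, zero_add])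
  rw [integral_congr hsplit, integral_add (hφ_ga.add hψ_fa) hprim,
    integral_apply₂_primitive_add_apply₂_primitive B hab hφ hψ, integral_add hφ_ga hψ_fa,
    show ∫ t in a..b, B (φ t) (g a) = B (∫ t in a..b, φ t) (g a) from
      (B.flip (g a)).intervalIntegral_comp_comm hφ,
    (B (f a)).intervalIntegral_comp_comm hψ, hf b ⟨hab, le_rfl⟩, hg b ⟨hab, le_rfl⟩]
  simp only [map_add, _root_.add_apply]
  abel

end Bilinear

namespace SL

def mvCLM (n : ℕ) : Mat n →L[ℝ] V n →L[ℝ] V n :=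
  ContinuousLinearMap.restrictScalarsL ℂ (V n) (V n) ℝ ℝ ∘L LinearMap.toContinuousLinearMap
    ((toEuclideanCLM (n := Fin n) (𝕜 := ℂ)).toAlgEquiv.toLinearEquiv.toLinearMap.restrictScalars ℝ)

theorem inner_mv_conjTranspose {n : ℕ} (M : Mat n) (x w : V n) :
    ⟪mv Mᴴ x, w⟫_ℂ = ⟪x, mv M w⟫_ℂ := by
  change ⟪toEuclideanCLM (n := Fin n) (𝕜 := ℂ) (star M) x, w⟫_ℂ =
    ⟪x, toEuclideanCLM (n := Fin n) (𝕜 := ℂ) M w⟫_ℂ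
  rw [map_star, ContinuousLinearMap.star_eq_adjoint, ContinuousLinearMap.adjoint_inner_left]

theorem lagrange_identity {n : ℕ} (P Q : Mat n) (y u g z v h : V n) :
    ⟪mv (Pᴴ * Qᴴ) z + mv Pᴴ v, u⟫_ℂ + ⟪z, g - mv (Q * P * Q) y - mv (Q * P) u⟫_ℂ -
        (⟪h - mv (Qᴴ * Pᴴ * Qᴴ) z - mv (Qᴴ * Pᴴ) v, y⟫_ℂ + ⟪v, mv (P * Q) y + mv P u⟫_ℂ) =
      ⟪z, g⟫_ℂ - ⟪h, y⟫_ℂ := by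
  simp only [← conjTranspose_mul, ← Matrix.mul_assoc, inner_add_left, inner_sub_left,
    inner_add_right, inner_sub_right, inner_mv_conjTranspose]
  ring

theorem _root_.MeasureTheory.IntegrableOn.conjTranspose {X : Type*} [MeasurableSpace X]
    {μ : Measure X} {S : Set X} {n : ℕ} {M : X → Mat n} (hM : IntegrableOn M S μ) :
    IntegrableOn (fun x => (M x)ᴴ) S μ :=
  (starL' ℝ (A := Mat n)).integrable_comp_iff.2 hM

theorem KM.conjTranspose {a b : ℝ} {n : ℕ} {p Q : ℝ → Mat n} (h : KM a b p Q) :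
    KM a b (fun t => (p t)ᴴ) (fun t => (Q t)ᴴ) := by
  obtain ⟨hunit, hp, hpQ, hQp, hQpQ⟩ := h
  refine ⟨hunit.mono fun t => (isUnit_conjTranspose _).2, ?_, ?_, ?_, ?_⟩ <;>
    simp only [← conjTranspose_nonsing_inv, ← conjTranspose_mul, ← Matrix.mul_assoc]
  exacts [IntegrableOn.conjTranspose hp, IntegrableOn.conjTranspose hQp,
    IntegrableOn.conjTranspose hpQ, IntegrableOn.conjTranspose hQpQ]

theorem InMaxDom.intervalIntegrable {a b : ℝ} (hab : a ≤ b) {n : ℕ} {p Q : ℝ → Mat n}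
    {y u g : ℝ → V n} (hKM : KM a b p Q) (hg : MemLp g 2 (volume.restrict (Ioo a b)))
    (h : InMaxDom a b p Q y u g) :
    IntervalIntegrable (fun τ => mv ((p τ)⁻¹ * Q τ) (y τ) + mv (p τ)⁻¹ (u τ)) volume a b ∧
      IntervalIntegrable
        (fun τ => g τ - mv (Q τ * (p τ)⁻¹ * Q τ) (y τ) - mv (Q τ * (p τ)⁻¹) (u τ)) volume a b := by
  obtain ⟨-, hp, hpQ, hQp, hQpQ⟩ := hKM
  have hcy : ContinuousOn y (uIcc a b) := uIcc_of_le hab ▸ h.cy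
  have hcu : ContinuousOn u (uIcc a b) := uIcc_of_le hab ▸ h.cu
  have hI : ∀ {W : Type} [NormedAddCommGroup W] {f : ℝ → W},
      IntegrableOn f (Ioo a b) → IntervalIntegrable f volume a b :=
    fun hf => (intervalIntegrable_iff_integrableOn_Ioo_of_le hab).2 hf
  exact ⟨((hI hpQ).apply₂_continuousOn (mvCLM n) hcy).add
      ((hI hp).apply₂_continuousOn (mvCLM n) hcu),
    ((hI (hg.integrable one_le_two)).sub ((hI hQpQ).apply₂_continuousOn (mvCLM n) hcy)).sub
      ((hI hQp).apply₂_continuousOn (mvCLM n) hcu)⟩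

/-- Here `u = D^[1]y`, `g = D^[2]y`, `v = D^{1}z`, `h = D^{2}z`, and `x·conj w` is `⟪w, x⟫` in
Mathlib's convention for the inner product on `ℂ^s`. -/
theorem stmt1 (s : ℕ) (a b : ℝ) (hab : a < b) (p Q : ℝ → Mat s)
    (hKM : KM a b p Q)
    (y u g z v h : ℝ → V s)
    (hy : InMaxDom a b p Q y u g)
    (hg : MemLp g 2 (volume.restrict (Ioo a b)))
    (hz : InMaxDom a b (fun t => (p t)ᴴ) (fun t => (Q t)ᴴ) z v h)
    (hh : MemLp h 2 (volume.restrict (Ioo a b))) :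
    ∫ t in Ioo a b, ((inner ℂ (z t) (g t) : ℂ) - (inner ℂ (h t) (y t) : ℂ)) =
      ((inner ℂ (z b) (u b) : ℂ) - (inner ℂ (v b) (y b) : ℂ)) -
        ((inner ℂ (z a) (u a) : ℂ) - (inner ℂ (v a) (y a) : ℂ)) := by
  obtain ⟨hφy, hφu⟩ := hy.intervalIntegrable hab.le hKM hg
  obtain ⟨hφz, hφv⟩ := hz.intervalIntegrable hab.le hKM.conjTranspose hh
  set B := (isBoundedBilinearMap_inner (𝕜 := ℂ) (E := V s)).toContinuousLinearMap
  have hzu := intervalIntegral.integral_apply₂_add_apply₂_eq_sub B hab.le hφz hφu hz.hy hy.hu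
  have hvy := intervalIntegral.integral_apply₂_add_apply₂_eq_sub B hab.le hφv hφy hz.hu hy.hy
  rw [← integral_Ioc_eq_integral_Ioo, ← intervalIntegral.integral_of_le hab.le]
  have hIzu := intervalIntegrable_apply₂_add_apply₂ B hab.le hφz hφu hz.hy hy.hu
  have hIvy := intervalIntegrable_apply₂_add_apply₂ B hab.le hφv hφy hz.hu hy.hy
  refine (intervalIntegral.integral_congr fun t _ => ?_).trans
    ((intervalIntegral.integral_sub hIzu hIvy).trans ?_)
  · simp only [B, IsBoundedBilinearMap.toContinuousLinearMap_apply, ← conjTranspose_nonsing_inv]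
    exact (lagrange_identity (p t)⁻¹ (Q t) (y t) (u t) (g t) (z t) (v t) (h t)).symm
  · rw [hzu, hvy]
    simp only [B, IsBoundedBilinearMap.toContinuousLinearMap_apply]
    ring

end SL
end
end

section
/- Let K ∈ M_{2s}(ℂ) with block decomposition K = (K_{11}, K_{12}; K_{21}, K_{22}) into s×s blocks. The subspace W = {(u_a, u_b, v_a, v_b) ∈ (ℂ^s)^4 : (K − I)(u_a, u_b) + i(K + I)(v_a, v_b) = 0} decomposes as a direct product W = W_a × W_b of subspaces W_a ⊆ {(u_a, v_a)} ≅ ℂ^{2s} and W_b ⊆ {(u_b, v_b)} ≅ ℂ^{2s} if and only if K_{12} = K_{21} = 0. -/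
/-!
With `p = u + i v` and `q = u - i v`, the equation `(K - I) u + i (K + I) v = 0` reads `K p = q`,
so `W` is the graph of `K` in other coordinates. A splitting `W = W_a × W_b` forces `W` to be stable
under the projection `P = diag(I, 0)` applied to `u` and `v`; since the change of coordinates commutes
with `P`, this says that `P` commutes with `K`, i.e. that the off-diagonal blocks of `K` vanish.
Conversely, for block-diagonal `K` the equation splits into the equations for `K₁₁` and `K₂₂`.
-/

open MeasureTheory Set Filter Topology Matrix
open scoped Matrix.Norms.L2Operator InnerProductSpace ENNReal

noncomputable section

namespace SL

variable (s : ℕ) (a b : ℝ)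

variable {s a b}

section BoundaryMap

variable {n : Type*} [Fintype n] [DecidableEq n]

/-- `W = ker (boundaryMap K)`, with `(u, v) = (Γ₁y, Γ₂y)`. -/
def boundaryMap (K : Matrix n n ℂ) : (n → ℂ) × (n → ℂ) →ₗ[ℂ] n → ℂ :=
  (K - 1).mulVecLin ∘ₗ LinearMap.fst ℂ _ _ + Complex.I • (K + 1).mulVecLin ∘ₗ LinearMap.snd ℂ _ _

@[simp]
lemma boundaryMap_apply (K : Matrix n n ℂ) (u v : n → ℂ) :
    boundaryMap K (u, v) = (K - 1) *ᵥ u + Complex.I • (K + 1) *ᵥ v :=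
  rfl

lemma boundaryMap_apply_eq_mulVec_sub (K : Matrix n n ℂ) (u v : n → ℂ) :
    boundaryMap K (u, v) = K *ᵥ (u + Complex.I • v) - (u - Complex.I • v) := by
  simp only [boundaryMap_apply, sub_mulVec, add_mulVec, one_mulVec, mulVec_add, mulVec_smul,
    smul_add]
  abel

lemma commute_of_boundaryMap_mulVec_eq_zero {K D : Matrix n n ℂ}
    (h : ∀ u v, boundaryMap K (u, v) = 0 → boundaryMap K (D *ᵥ u, D *ᵥ v) = 0) :
    Commute D K := by
  refine (ext_iff_mulVec.2 fun p => ?_).symm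
  -- the solution `(u, v)` with `u + i v = p` and `u - i v = K p`
  set u := (2 : ℂ)⁻¹ • (p + K *ᵥ p)
  set v := (Complex.I / 2) • (K *ᵥ p - p)
  have hp : u + Complex.I • v = p := by
    simp only [u, v, smul_smul, ← mul_div_assoc, Complex.I_mul_I]
    module
  have hKp : u - Complex.I • v = K *ᵥ p := by
    simp only [u, v, smul_smul, ← mul_div_assoc, Complex.I_mul_I]
    module
  have hD := h u v (by rw [boundaryMap_apply_eq_mulVec_sub, hp, hKp, sub_self])
  rw [boundaryMap_apply_eq_mulVec_sub, ← mulVec_smul, ← mulVec_add, ← mulVec_sub, hp, hKp,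
    sub_eq_zero] at hD
  simpa only [mulVec_mulVec] using hD

end BoundaryMap

section Blocks

variable {l m α : Type*} [Fintype l] [Fintype m] [DecidableEq l]

lemma fromBlocks_one_zero_zero_zero_mulVec [NonAssocSemiring α] (a : l → α) (b : m → α) :
    fromBlocks (1 : Matrix l l α) 0 0 (0 : Matrix m m α) *ᵥ Sum.elim a b = Sum.elim a 0 := by
  simp [fromBlocks_mulVec]

lemma commute_fromBlocks_one_zero_zero_zero_iff [Semiring α] (K : Matrix (l ⊕ m) (l ⊕ m) α) :
    Commute (fromBlocks 1 0 0 0) K ↔ K.toBlocks₁₂ = 0 ∧ K.toBlocks₂₁ = 0 := by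
  rw [← fromBlocks_toBlocks K, Commute, SemiconjBy, fromBlocks_multiply, fromBlocks_multiply]
  simp [fromBlocks_inj, eq_comm]

lemma boundaryMap_fromBlocks_zero_zero [DecidableEq m] (A : Matrix l l ℂ) (B : Matrix m m ℂ)
    (ua va : l → ℂ) (ub vb : m → ℂ) :
    boundaryMap (fromBlocks A 0 0 B) (Sum.elim ua ub, Sum.elim va vb) =
      Sum.elim (boundaryMap A (ua, va)) (boundaryMap B (ub, vb)) := by
  simp only [boundaryMap_apply_eq_mulVec_sub, fromBlocks_mulVec, zero_mulVec, add_zero, zero_add]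
  ext (i | i) <;> rfl

end Blocks

/-- the subspace
`W = {(u_a, u_b, v_a, v_b) : (K - I)(u_a, u_b) + i(K + I)(v_a, v_b) = 0}`
decomposes as a direct product `W = W_a × W_b` (with `W_a` in the
`(u_a, v_a)`-variables and `W_b` in the `(u_b, v_b)`-variables) iff
`K₁₂ = K₂₁ = 0`. -/
theorem stmt17 (s : ℕ)
    (K : Matrix (Fin s ⊕ Fin s) (Fin s ⊕ Fin s) ℂ) :
    (∃ (Wa Wb : Submodule ℂ ((Fin s → ℂ) × (Fin s → ℂ))),
      ∀ ua ub va vb : Fin s → ℂ,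
        ((K - 1).mulVec (Sum.elim ua ub)
            + Complex.I • ((K + 1).mulVec (Sum.elim va vb)) = 0
          ↔ ((ua, va) ∈ Wa ∧ (ub, vb) ∈ Wb)))
    ↔ (K.toBlocks₁₂ = 0 ∧ K.toBlocks₂₁ = 0) := by
  simp_rw [← boundaryMap_apply]
  constructor
  · rintro ⟨Wa, Wb, hW⟩
    refine (commute_fromBlocks_one_zero_zero_zero_iff K).1 <|
      commute_of_boundaryMap_mulVec_eq_zero fun u v huv => ?_
    rw [← Sum.elim_comp_inl_inr u, ← Sum.elim_comp_inl_inr v] at huv ⊢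
    rw [fromBlocks_one_zero_zero_zero_mulVec, fromBlocks_one_zero_zero_zero_mulVec]
    exact (hW _ _ _ _).2 ⟨((hW _ _ _ _).1 huv).1, zero_mem _⟩
  · rintro ⟨h12, h21⟩
    refine ⟨LinearMap.ker (boundaryMap K.toBlocks₁₁), LinearMap.ker (boundaryMap K.toBlocks₂₂),
      fun ua ub va vb => ?_⟩
    conv_lhs => rw [← fromBlocks_toBlocks K, h12, h21, boundaryMap_fromBlocks_zero_zero]
    rw [← Sum.elim_zero_zero, Sum.elim_eq_iff, LinearMap.mem_ker, LinearMap.mem_ker]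

end SL
end
end
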